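/- arXiv:1509.07406 — 4 statements merged into one kernel-verified Lean document; each statement's English description precedes it below -/
import Mathlib

section
/- Let p > 2 be prime and c coprime to p. For integers a, b with p ∤ a and p ∤ b, there exist x, y with x*y ≡ c (mod p) and (x+a)*(y+b) ≡ c (mod p) and p ∤ x if and only if the Legendre symbol identity ((a*b)/p) * ((a*b - 4*c)/p) = 1 holds or p divides a*b - 4*c. -/
/-! Reducing modulo `p`, eliminating `y = c / x` turns the two conditions into the quadratic
`b x² + a b x + a c = 0`, whose discriminant is `a b (a b - 4 c)`. Over a field of odd
characteristic such a quadratic has a root iff its discriminant is a square, and a residue is a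
square iff its Legendre symbol is `1` or it vanishes. -/

theorem exists_quadratic_eq_zero_iff_isSquare_discrim {K : Type*} [Field K] [NeZero (2 : K)]
    {a b c : K} (ha : a ≠ 0) :
    (∃ x : K, a * (x * x) + b * x + c = 0) ↔ IsSquare (discrim a b c) := by
  constructor
  · rintro ⟨x, hx⟩
    exact ⟨2 * a * x + b, by rw [(quadratic_eq_zero_iff_discrim_eq_sq ha x).mp hx, sq]⟩
  · exact exists_quadratic_eq_zero ha

theorem exists_shifted_pair_on_hyperbola_iff {K : Type*} [Field K] {a b c : K}
    (ha : a ≠ 0) (hc : c ≠ 0) :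
    (∃ x y : K, x ≠ 0 ∧ x * y = c ∧ (x + a) * (y + b) = c) ↔
      ∃ x : K, b * (x * x) + a * b * x + a * c = 0 := by
  constructor
  · rintro ⟨x, y, -, h₁, h₂⟩
    exact ⟨x, by linear_combination x * h₂ - (a + x) * h₁⟩
  · rintro ⟨x, hx⟩
    have hx0 : x ≠ 0 := by
      rintro rfl
      exact mul_ne_zero ha hc (by simpa using hx)
    refine ⟨x, c / x, hx0, mul_div_cancel₀ c hx0, ?_⟩
    field_simp
    linear_combination hx

theorem exists_int_shifted_pair_iff_zmod (n : ℕ) (a b c : ℤ) :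
    (∃ x y : ℤ, ¬ (n : ℤ) ∣ x ∧ x * y ≡ c [ZMOD n] ∧ (x + a) * (y + b) ≡ c [ZMOD n]) ↔
      ∃ x y : ZMod n, x ≠ 0 ∧ x * y = c ∧ (x + a) * (y + b) = c := by
  simp_rw [← ZMod.intCast_eq_intCast_iff, ← ZMod.intCast_zmod_eq_zero_iff_dvd, Int.cast_mul,
    Int.cast_add]
  constructor
  · rintro ⟨x, y, h⟩
    exact ⟨x, y, h⟩
  · rintro ⟨x, y, h⟩
    obtain ⟨x, rfl⟩ := ZMod.intCast_surjective x
    obtain ⟨y, rfl⟩ := ZMod.intCast_surjective y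
    exact ⟨x, y, h⟩

theorem legendreSym.isSquare_iff (p : ℕ) [Fact p.Prime] (a : ℤ) :
    IsSquare (a : ZMod p) ↔ legendreSym p a = 1 ∨ (p : ℤ) ∣ a := by
  by_cases ha : (a : ZMod p) = 0
  · simp [ha, (ZMod.intCast_zmod_eq_zero_iff_dvd a p).mp ha]
  · rw [legendreSym.eq_one_iff p ha, ← ZMod.intCast_zmod_eq_zero_iff_dvd]
    simp [ha]

/-- For an odd prime `p`, `c` coprime to `p`, `p ∤ a`, `p ∤ b`: there are points
`(x,y)` and `(x+a,y+b)` on the hyperbola `x*y ≡ c (mod p)` iff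
`((a*b)/p)*((a*b-4c)/p) = 1` or `p ∣ a*b - 4*c`. -/
theorem stmt_2 (p : ℕ) [Fact p.Prime] (hp2 : 2 < p) (c a b : ℤ)
    (hc : IsCoprime c (p : ℤ)) (ha : ¬ (p : ℤ) ∣ a) (hb : ¬ (p : ℤ) ∣ b) :
    (∃ x y : ℤ, ¬ (p : ℤ) ∣ x ∧ x * y ≡ c [ZMOD (p : ℤ)] ∧
        (x + a) * (y + b) ≡ c [ZMOD (p : ℤ)]) ↔
      (legendreSym p (a * b) * legendreSym p (a * b - 4 * c) = 1 ∨
        (p : ℤ) ∣ (a * b - 4 * c)) := by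
  have hp : Prime (p : ℤ) := Nat.prime_iff_prime_int.mp Fact.out
  have : NeZero (2 : ZMod p) := ⟨by
    rw [← Nat.cast_ofNat, Ne, ZMod.natCast_eq_zero_iff]
    exact fun h => by have := Nat.le_of_dvd two_pos h; omega⟩
  have hc' : ¬ (p : ℤ) ∣ c := fun h => hp.not_isUnit (hc.isUnit_of_dvd' h dvd_rfl)
  have hdvd : (p : ℤ) ∣ a * b * (a * b - 4 * c) ↔ (p : ℤ) ∣ a * b - 4 * c := by
    simp [hp.dvd_mul, ha, hb]
  rw [← ZMod.intCast_zmod_eq_zero_iff_dvd] at ha hb hc'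
  rw [exists_int_shifted_pair_iff_zmod, exists_shifted_pair_on_hyperbola_iff ha hc',
    exists_quadratic_eq_zero_iff_isSquare_discrim hb,
    show discrim (b : ZMod p) (a * b) (a * c) = ((a * b * (a * b - 4 * c) : ℤ) : ZMod p) by
      push_cast [discrim]; ring,
    legendreSym.isSquare_iff, legendreSym.mul, hdvd]
end

section
/- Let p be an odd prime, c coprime to p, and H < p a positive integer. Suppose no box B(X,Y;H) of side length H contains two points of the modular hyperbola x*y ≡ c (mod p). Then for all 1 ≤ b1 < b2 ≤ H/2, the residue c*(b̄1 - b̄2) mod p is not congruent to any l with 1 ≤ l ≤ H, where b̄i is the inverse of bi mod p. -/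
/-!
In `ZMod p` the congruence reads `c (b₂ - b₁) = l b₁ b₂`. Any solution `x` of
`e x (x + a) = c a` with `0 < a < H` and `0 ≤ e < H` yields the two hyperbola points
`(x, c / (x + a) + e)` and `(x + a, c / (x + a))`, which lie in one box of side `H`.
For `l < H` take `x = b₁`, `a = b₂ - b₁`, `e = l`; for `l = H = 2 b₂` rescale to `2 b₁, 2 b₂`.
For `l = H > 2 b₂` the three shifts `(a, e) = (2 b₂, H - (b₂ - b₁)), (2 b₂, H - b₁ - b₂),
(b₂ - b₁, H - b₁ - b₂)` give quadratics whose discriminants multiply to a square, so one of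
them is a square and the corresponding quadratic has a root.
-/

/-- `x` lies (as a residue mod `p`) in the interval `[X+1, X+H]` taken mod `p`. -/
def InBox (p : ℕ) (X H : ℤ) (x : ZMod p) : Prop :=
  ∃ t : ℤ, X + 1 ≤ t ∧ t ≤ X + H ∧ (t : ZMod p) = x

theorem FiniteField.isSquare_or_of_isSquare_mul_mul {F : Type*} [Field F] [Fintype F]
    {x y z : F} (h : IsSquare (x * y * z)) : IsSquare x ∨ IsSquare y ∨ IsSquare z := by
  classical
  by_contra! hxyz
  obtain ⟨hx, hy, hz⟩ := hxyz
  rw [← quadraticChar_neg_one_iff_not_isSquare] at hx hy hz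
  refine quadraticChar_neg_one_iff_not_isSquare.mp ?_ h
  rw [map_mul, map_mul, hx, hy, hz]
  norm_num

theorem discrim_mul_discrim_mul_discrim {F : Type*} [Field F] {c H b₁ b₂ : F}
    (hd : b₂ - b₁ ≠ 0) (hcd : c * (b₂ - b₁) = H * b₁ * b₂) :
    discrim (H - (b₂ - b₁)) ((H - (b₂ - b₁)) * (2 * b₂)) (-(c * (2 * b₂))) *
      discrim (H - b₁ - b₂) ((H - b₁ - b₂) * (2 * b₂)) (-(c * (2 * b₂))) *
      discrim (H - b₁ - b₂) ((H - b₁ - b₂) * (b₂ - b₁)) (-(c * (b₂ - b₁))) =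
    ((2 * b₂) ^ 2 * (H - (b₂ - b₁)) * (H - b₁ - b₂) * (b₁ + b₂) *
      (H * (b₁ + b₂) - (b₂ - b₁) ^ 2) / (b₂ - b₁)) ^ 2 := by
  rw [← eq_div_iff hd] at hcd
  subst hcd
  simp only [discrim]
  field_simp
  ring

theorem ZMod.intCast_ne_zero_of_pos_of_lt {p : ℕ} {m : ℤ} (h0 : 0 < m) (hp : m < p) :
    (m : ZMod p) ≠ 0 := by
  rw [Ne, ZMod.intCast_zmod_eq_zero_iff_dvd]
  exact fun h => absurd (Int.le_of_dvd h0 h) (by omega)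

theorem inBox_add_intCast {p : ℕ} [NeZero p] (x : ZMod p) {H a : ℤ} (ha : 0 ≤ a)
    (haH : a < H) : InBox p (x.val - 1) H (x + a) :=
  ⟨x.val + a, by omega, by omega, by simp⟩

def HyperbolaBoxFree (p : ℕ) (c H : ℤ) : Prop :=
  ∀ X Y : ℤ, ¬ ∃ x1 y1 x2 y2 : ZMod p,
    x1 * y1 = (c : ZMod p) ∧ x2 * y2 = (c : ZMod p) ∧ (x1, y1) ≠ (x2, y2) ∧
    InBox p X H x1 ∧ InBox p Y H y1 ∧ InBox p X H x2 ∧ InBox p Y H y2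

namespace HyperbolaBoxFree

variable {p : ℕ} [Fact p.Prime] {c H : ℤ}

theorem mul_mul_add_ne (h : HyperbolaBoxFree p c H) (hHp : H < p) {x : ZMod p} {a e : ℤ}
    (ha : 0 < a) (haH : a < H) (he : 0 ≤ e) (heH : e < H) (hxa : x + a ≠ 0) :
    e * x * (x + a) ≠ c * a := by
  intro hxe
  set y : ZMod p := c / (x + a)
  refine h (x.val - 1) (y.val - 1) ⟨x, y + e, x + a, y, ?_, ?_, ?_, ?_, ?_, ?_, ?_⟩
  · simp only [y]
    field_simp
    linear_combination hxe
  · exact mul_div_cancel₀ _ hxa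
  · intro hxy
    have : ((a : ℤ) : ZMod p) = 0 := by simpa using congrArg Prod.fst hxy
    exact ZMod.intCast_ne_zero_of_pos_of_lt ha (haH.trans hHp) this
  · simpa using inBox_add_intCast x le_rfl (ha.trans haH)
  · exact inBox_add_intCast y he heH
  · exact inBox_add_intCast x ha.le haH
  · simpa using inBox_add_intCast y le_rfl (ha.trans haH)

theorem mul_sub_ne (h : HyperbolaBoxFree p c H) (hHp : H < p) {b₁ b₂ l : ℤ} (hb₁ : 0 < b₁)
    (hb₁₂ : b₁ < b₂) (hb₂ : b₂ ≤ H) (hl : 0 ≤ l) (hlH : l < H) :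
    (c : ZMod p) * (b₂ - b₁) ≠ l * b₁ * b₂ := by
  intro hcd
  refine h.mul_mul_add_ne hHp (x := b₁) (a := b₂ - b₁) (e := l) (by omega) (by omega) hl hlH
    ?_ ?_
  · simpa using ZMod.intCast_ne_zero_of_pos_of_lt (p := p) (hb₁.trans hb₁₂) (by omega)
  · push_cast
    linear_combination -hcd

theorem not_isSquare_discrim (h : HyperbolaBoxFree p c H) (hHp : H < p) {a e : ℤ}
    (ha : 0 < a) (haH : a < H) (he : 0 < e) (heH : e < H) (hca : (c : ZMod p) * a ≠ 0) :
    ¬ IsSquare (discrim (e : ZMod p) (e * a) (-(c * a))) := by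
  rintro ⟨s, hs⟩
  have : NeZero (2 : ZMod p) := ⟨by exact_mod_cast
    (ZMod.intCast_ne_zero_of_pos_of_lt two_pos (by omega) : ((2 : ℤ) : ZMod p) ≠ 0)⟩
  obtain ⟨x, hx⟩ := exists_quadratic_eq_zero
    (ZMod.intCast_ne_zero_of_pos_of_lt he (heH.trans hHp)) ⟨s, hs⟩
  refine h.mul_mul_add_ne hHp ha haH he.le heH (x := x) (fun hxa => hca ?_)
    (by linear_combination hx)
  linear_combination -hx + e * x * hxa

theorem mul_sub_ne_self_mul_of_two_mul_lt (h : HyperbolaBoxFree p c H) (hHp : H < p)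
    {b₁ b₂ : ℤ} (hb₁ : 0 < b₁) (hb₁₂ : b₁ < b₂) (hb₂ : 2 * b₂ < H) :
    (c : ZMod p) * (b₂ - b₁) ≠ H * b₁ * b₂ := by
  intro hcd
  have hd : ((b₂ - b₁ : ℤ) : ZMod p) ≠ 0 := ZMod.intCast_ne_zero_of_pos_of_lt (by omega) (by omega)
  have hc : (c : ZMod p) ≠ 0 := by
    intro hc
    rw [hc, zero_mul] at hcd
    refine mul_ne_zero (mul_ne_zero ?_ ?_) ?_ hcd.symm <;>
      exact ZMod.intCast_ne_zero_of_pos_of_lt (by omega) (by omega)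
  have h₁ := h.not_isSquare_discrim hHp (a := 2 * b₂) (e := H - (b₂ - b₁))
    (by omega) (by omega) (by omega) (by omega)
    (mul_ne_zero hc (ZMod.intCast_ne_zero_of_pos_of_lt (by omega) (by omega)))
  have h₂ := h.not_isSquare_discrim hHp (a := 2 * b₂) (e := H - b₁ - b₂)
    (by omega) (by omega) (by omega) (by omega)
    (mul_ne_zero hc (ZMod.intCast_ne_zero_of_pos_of_lt (by omega) (by omega)))
  have h₃ := h.not_isSquare_discrim hHp (a := b₂ - b₁) (e := H - b₁ - b₂)
    (by omega) (by omega) (by omega) (by omega) (mul_ne_zero hc hd)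
  push_cast at h₁ h₂ h₃ hd hcd
  have := FiniteField.isSquare_or_of_isSquare_mul_mul
    ⟨_, (discrim_mul_discrim_mul_discrim hd hcd).trans (sq _)⟩
  tauto

theorem mul_sub_ne_self_mul (h : HyperbolaBoxFree p c H) (hHp : H < p) {b₁ b₂ : ℤ}
    (hb₁ : 0 < b₁) (hb₁₂ : b₁ < b₂) (hb₂ : 2 * b₂ ≤ H) :
    (c : ZMod p) * (b₂ - b₁) ≠ H * b₁ * b₂ := by
  rcases hb₂.lt_or_eq with hb₂ | rfl
  · exact h.mul_sub_ne_self_mul_of_two_mul_lt hHp hb₁ hb₁₂ hb₂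
  intro hcd
  refine h.mul_sub_ne hHp (b₁ := 2 * b₁) (b₂ := 2 * b₂) (l := b₂) (by omega) (by omega) le_rfl
    (by omega) (by omega) ?_
  push_cast at hcd ⊢
  linear_combination 2 * hcd

end HyperbolaBoxFree

theorem stmt_5_general (p : ℕ) [Fact p.Prime] (c : ℤ) (H : ℤ) (hHp : H < p)
    (hyp : ∀ X Y : ℤ, ¬ ∃ x1 y1 x2 y2 : ZMod p,
      x1 * y1 = (c : ZMod p) ∧ x2 * y2 = (c : ZMod p) ∧ (x1, y1) ≠ (x2, y2) ∧
      InBox p X H x1 ∧ InBox p Y H y1 ∧ InBox p X H x2 ∧ InBox p Y H y2) :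
    ∀ b1 b2 bbar1 bbar2 l : ℤ, 1 ≤ b1 → b1 < b2 → 2 * b2 ≤ H →
      b1 * bbar1 ≡ 1 [ZMOD (p : ℤ)] → b2 * bbar2 ≡ 1 [ZMOD (p : ℤ)] →
      1 ≤ l → l ≤ H → ¬ (c * (bbar1 - bbar2) ≡ l [ZMOD (p : ℤ)]) := by
  intro b1 b2 bbar1 bbar2 l hb1 hb12 hb2H hbar1 hbar2 hl1 hlH hcon
  have h : HyperbolaBoxFree p c H := hyp
  simp only [← ZMod.intCast_eq_intCast_iff, Int.cast_mul, Int.cast_sub, Int.cast_one]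
    at hbar1 hbar2 hcon
  have hcd : (c : ZMod p) * (b2 - b1) = l * b1 * b2 := by
    linear_combination b1 * b2 * hcon - c * b2 * hbar1 + c * b1 * hbar2
  rcases hlH.lt_or_eq with hlH | rfl
  · exact h.mul_sub_ne hHp (by omega) hb12 (by omega) (by omega) hlH hcd
  · exact h.mul_sub_ne_self_mul hHp (by omega) hb12 hb2H hcd

/-- If no box of side `H` contains two points of the hyperbola `x*y ≡ c (mod p)`, then
for `1 ≤ b1 < b2 ≤ H/2`, the residue `c*(b̄1 - b̄2)` is not congruent to any
`1 ≤ l ≤ H` mod `p`. -/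
theorem stmt_5 (p : ℕ) [Fact p.Prime] (hodd : Odd p) (c : ℤ)
    (hc : IsCoprime c (p : ℤ)) (H : ℤ) (hH : 1 ≤ H) (hHp : H < p)
    (hyp : ∀ X Y : ℤ, ¬ ∃ x1 y1 x2 y2 : ZMod p,
      x1 * y1 = (c : ZMod p) ∧ x2 * y2 = (c : ZMod p) ∧ (x1, y1) ≠ (x2, y2) ∧
      InBox p X H x1 ∧ InBox p Y H y1 ∧ InBox p X H x2 ∧ InBox p Y H y2) :
    ∀ b1 b2 bbar1 bbar2 l : ℤ, 1 ≤ b1 → b1 < b2 → 2 * b2 ≤ H →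
      b1 * bbar1 ≡ 1 [ZMOD (p : ℤ)] → b2 * bbar2 ≡ 1 [ZMOD (p : ℤ)] →
      1 ≤ l → l ≤ H → ¬ (c * (bbar1 - bbar2) ≡ l [ZMOD (p : ℤ)]) :=
  stmt_5_general p c H hHp hyp
end

section
/- Let p be an odd prime and χ a non-principal Dirichlet character mod p. Suppose J ≥ 1 and S is a set of J pairs (ai, bi) in [1, M]^2 such that χ(ai)·χ(ai - c·b̄i) = -1 for all but at most one pair, where b̄i is the inverse of bi mod p. If r ≥ 1 and the sum over b' ≤ M of the 2r-th power of |Σ_{a' ≤ M} χ(a' - c·b̄')| is at most C, then (M - 1)·|Σ_{a' ≤ M} χ(a')|^{2r} ≤ C. -/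
/-- If `χ(a)·χ(a - c·b̄) = -1` for all but at most one pair `(a,b) ∈ [1,M]²`, and the
mean value `Σ_{b ≤ M} |Σ_{a ≤ M} χ(a - c·b̄)|^{2r}` is at most `C`, then
`(M-1)·|Σ_{a ≤ M} χ(a)|^{2r} ≤ C`. -/
theorem stmt_6 (p : ℕ) [Fact p.Prime] (hodd : Odd p)
    (χ : DirichletCharacter ℂ p) (hχ : χ ≠ 1) (c : ℤ) (hc : IsCoprime c (p : ℤ))
    (M : ℕ) (hM : 1 ≤ M) (r : ℕ) (hr : 1 ≤ r) (C : ℝ) (hC : 0 < C)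
    (h1 : ∃ e : ℕ × ℕ, ∀ a ∈ Finset.Icc 1 M, ∀ b ∈ Finset.Icc 1 M, (a, b) ≠ e →
      χ (a : ZMod p) * χ ((a : ZMod p) - (c : ZMod p) * ((b : ZMod p))⁻¹) = -1)
    (h2 : ∑ b ∈ Finset.Icc 1 M,
        ‖∑ a ∈ Finset.Icc 1 M,
          χ ((a : ZMod p) - (c : ZMod p) * ((b : ZMod p))⁻¹)‖ ^ (2 * r) ≤ C) :
    ((M : ℝ) - 1) * ‖∑ a ∈ Finset.Icc 1 M, χ (a : ZMod p)‖ ^ (2 * r) ≤ C := by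
  obtain ⟨e, he⟩ := h1
  set T := ∑ a ∈ Finset.Icc 1 M, χ (a : ZMod p) with hT
  have key : ∀ b ∈ Finset.Icc 1 M, b ≠ e.2 →
      ‖∑ a ∈ Finset.Icc 1 M,
        χ ((a : ZMod p) - (c : ZMod p) * ((b : ZMod p))⁻¹)‖ = ‖T‖ := by
    intro b hb hbe
    have hsum : ∑ a ∈ Finset.Icc 1 M,
        χ ((a : ZMod p) - (c : ZMod p) * ((b : ZMod p))⁻¹)
        = -(starRingEnd ℂ) T := by
      rw [hT, map_sum, ← Finset.sum_neg_distrib]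
      refine Finset.sum_congr rfl fun a ha => ?_
      have hne : (a, b) ≠ e := fun h => hbe (by rw [← h])
      have hprod := he a ha b hb hne
      have hχa : χ (a : ZMod p) ≠ 0 := by
        intro h0
        rw [h0, zero_mul] at hprod
        exact absurd hprod (by norm_num)
      have hunit : IsUnit ((a : ℕ) : ZMod p) := by
        by_contra h
        exact hχa (χ.map_nonunit h)
      have hnorm : ‖χ (a : ZMod p)‖ = 1 := by
        rw [← hunit.unit_spec]
        exact χ.unit_norm_eq_one hunit.unit
      have hval : χ ((a : ZMod p) - (c : ZMod p) * ((b : ZMod p))⁻¹)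
          = -(χ (a : ZMod p))⁻¹ := by
        have h' : χ ((a : ZMod p) - (c : ZMod p) * ((b : ZMod p))⁻¹)
            = (χ (a : ZMod p))⁻¹ * (χ (a : ZMod p)
              * χ ((a : ZMod p) - (c : ZMod p) * ((b : ZMod p))⁻¹)) := by
          rw [← mul_assoc, inv_mul_cancel₀ hχa, one_mul]
        rw [h', hprod, mul_neg_one]
      rw [hval, Complex.inv_eq_conj hnorm]
    rw [hsum, norm_neg, RCLike.norm_conj]
  set s := (Finset.Icc 1 M).erase e.2 with hs
  have hsub : s ⊆ Finset.Icc 1 M := Finset.erase_subset _ _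
  have h3 : ∑ b ∈ s,
      ‖∑ a ∈ Finset.Icc 1 M,
        χ ((a : ZMod p) - (c : ZMod p) * ((b : ZMod p))⁻¹)‖ ^ (2 * r)
      ≤ ∑ b ∈ Finset.Icc 1 M,
      ‖∑ a ∈ Finset.Icc 1 M,
        χ ((a : ZMod p) - (c : ZMod p) * ((b : ZMod p))⁻¹)‖ ^ (2 * r) :=
    Finset.sum_le_sum_of_subset_of_nonneg hsub
      (fun _ _ _ => pow_nonneg (norm_nonneg _) _)
  have h4 : ∑ b ∈ s,
      ‖∑ a ∈ Finset.Icc 1 M,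
        χ ((a : ZMod p) - (c : ZMod p) * ((b : ZMod p))⁻¹)‖ ^ (2 * r)
      = (s.card : ℝ) * ‖T‖ ^ (2 * r) := by
    rw [Finset.sum_congr rfl fun b hb => by
      rw [key b (hsub hb) (Finset.ne_of_mem_erase hb)]]
    rw [Finset.sum_const, nsmul_eq_mul]
  have hcard : M - 1 ≤ s.card := by
    have := Finset.pred_card_le_card_erase (s := Finset.Icc 1 M) (a := e.2)
    simpa [hs, Nat.card_Icc] using this
  have hcardR : (M : ℝ) - 1 ≤ (s.card : ℝ) := by
    have : ((M - 1 : ℕ) : ℝ) ≤ (s.card : ℝ) := Nat.cast_le.mpr hcard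
    rwa [Nat.cast_sub hM, Nat.cast_one] at this
  calc ((M : ℝ) - 1) * ‖T‖ ^ (2 * r)
      ≤ (s.card : ℝ) * ‖T‖ ^ (2 * r) := by
        apply mul_le_mul_of_nonneg_right hcardR (pow_nonneg (norm_nonneg _) _)
    _ ≤ C := by rw [← h4]; exact h3.trans h2
end

section
/- For any odd prime p and any integer c coprime to p, the number of pairs (a, b) with 1 ≤ a, b ≤ p-1 such that ((a*b)/p)*((a*b - 4*c)/p) = 1 is at least (p-1)^2/2 - O(p^{3/2}). -/
/-!
With `s = ab`, every nonzero residue `s` arises from exactly `p - 1` pairs `(a, b)`, so the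
count is `p - 1` times the number of `s ∈ 𝔽_p` with `χ(s) χ(s - d) = 1`, where `d = 4c` and
`χ` is the quadratic character. Scaling `s` by `d` turns `∑ₛ χ(s) χ(s - d)` into
`χ(-1) J(χ, χ)`, and `J(χ, χ⁻¹) = -χ(-1)`, so the sum is `-1`. As `χ(s) χ(s - d) = ±1` for
`s ∉ {0, d}`, exactly `(p - 3) / 2` values of `s` qualify: the count is exactly
`(p - 1)(p - 3) / 2`, and no appeal to Weil's bound is needed.
-/

open Finset

section CharacterSum

variable {F R : Type*} [Field F] [CommRing R]

theorem MulChar.apply_mul_inv_apply (χ : MulChar F R) {a : F} (ha : a ≠ 0) :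
    χ a * χ⁻¹ a = 1 := by
  rw [← MulChar.mul_apply, mul_inv_cancel, MulChar.one_apply ha.isUnit]

variable [Fintype F]

theorem MulChar.sum_mul_inv_sub [IsDomain R] {χ : MulChar F R} (hχ : χ ≠ 1) {d : F}
    (hd : d ≠ 0) : ∑ s : F, χ s * χ⁻¹ (s - d) = -1 := by
  calc ∑ s : F, χ s * χ⁻¹ (s - d) = ∑ t : F, χ (d * t) * χ⁻¹ (d * t - d) :=
        (Equiv.sum_comp (Equiv.mulLeft₀ d hd) _).symm
    _ = ∑ t : F, χ⁻¹ (-1) * (χ t * χ⁻¹ (1 - t)) := by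
        refine sum_congr rfl fun t _ => ?_
        rw [show d * t - d = d * (-1 * (1 - t)) by ring, map_mul, map_mul, map_mul]
        linear_combination (χ t * χ⁻¹ (-1) * χ⁻¹ (1 - t)) * χ.apply_mul_inv_apply hd
    _ = -1 := by
        rw [← mul_sum, ← jacobiSum, jacobiSum_nontrivial_inv hχ, mul_neg, mul_comm,
          χ.apply_mul_inv_apply (neg_ne_zero.mpr one_ne_zero)]

variable [DecidableEq F]

theorem one_add_quadraticChar_mul_sub_eq {d : F} (hd : d ≠ 0) (s : F) :
    1 + quadraticChar F s * quadraticChar F (s - d) =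
      2 * (if quadraticChar F s * quadraticChar F (s - d) = 1 then 1 else 0) +
        (if s = 0 then 1 else 0) + (if s = d then 1 else 0) := by
  rcases eq_or_ne s 0 with rfl | hs
  · simp [hd.symm]
  rcases eq_or_ne s d with rfl | hsd
  · simp [hs]
  rcases quadraticChar_dichotomy hs with h | h <;>
    rcases quadraticChar_dichotomy (sub_ne_zero.mpr hsd) with h' | h' <;>
    simp [h, h', hs, hsd]

theorem two_mul_card_quadraticChar_mul_sub_eq_one_add_three (hF : ringChar F ≠ 2) {d : F}
    (hd : d ≠ 0) :
    2 * #{s | quadraticChar F s * quadraticChar F (s - d) = 1} + 3 = Fintype.card F := by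
  have hsum : ∑ s, quadraticChar F s * quadraticChar F (s - d) = -1 := by
    simpa only [(quadraticChar_isQuadratic F).inv] using
      MulChar.sum_mul_inv_sub (quadraticChar_ne_one hF) hd
  have hsummed := Fintype.sum_congr _ _ (one_add_quadraticChar_mul_sub_eq hd)
  simp only [sum_add_distrib, ← mul_sum, sum_ite_eq', mem_univ, if_true, hsum, sum_const,
    card_univ, nsmul_eq_mul, mul_one, sum_boole] at hsummed
  omega

end CharacterSum

theorem card_filter_mul_left₀ {G : Type*} [GroupWithZero G] [Fintype G] (P : G → Prop)
    [DecidablePred P] {a : G} (ha : a ≠ 0) : #{x | P (a * x)} = #{x | P x} :=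
  card_equiv (Equiv.mulLeft₀ a ha) (by simp)

namespace ZMod

theorem intCast_ne_zero_of_mem_Icc {n : ℕ} {b : ℤ} (hb : b ∈ Icc (1 : ℤ) ((n : ℤ) - 1)) :
    (b : ZMod n) ≠ 0 := by
  rw [mem_Icc] at hb
  rw [Ne, intCast_zmod_eq_zero_iff_dvd]
  intro h
  have := Int.le_of_dvd (by omega) h
  omega

theorem card_filter_Icc_intCast {n : ℕ} [NeZero n] (P : ZMod n → Prop) [DecidablePred P] :
    #{b ∈ Icc (1 : ℤ) ((n : ℤ) - 1) | P ((b : ℤ) : ZMod n)} =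
      #{x : ZMod n | x ≠ 0 ∧ P x} := by
  refine card_nbij' (fun b => (b : ZMod n)) (fun x => (x.val : ℤ)) ?_ ?_ ?_ ?_
  · intro b hb
    simp only [coe_filter, Set.mem_ofPred_eq, mem_univ, true_and] at hb ⊢
    exact ⟨intCast_ne_zero_of_mem_Icc hb.1, hb.2⟩
  · intro x hx
    simp only [coe_filter, mem_Icc, Set.mem_ofPred_eq, mem_univ, true_and] at hx ⊢
    have h0 : x.val ≠ 0 := (val_ne_zero x).mpr hx.1
    have hlt := x.val_lt
    refine ⟨⟨by omega, by omega⟩, ?_⟩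
    simpa using hx.2
  · intro b hb
    simp only [coe_filter, mem_Icc, Set.mem_ofPred_eq] at hb
    show ((b : ZMod n).val : ℤ) = b
    rw [val_intCast, Int.emod_eq_of_lt (by omega) (by omega)]
  · intro x _
    simp

theorem card_filter_Icc_prod_Icc_mul {p : ℕ} [Fact p.Prime] (P : ZMod p → Prop)
    [DecidablePred P] :
    #{ab ∈ Icc (1 : ℤ) ((p : ℤ) - 1) ×ˢ Icc (1 : ℤ) ((p : ℤ) - 1) |
        P ((ab.1 * ab.2 : ℤ) : ZMod p)} =
      (p - 1) * #{x : ZMod p | x ≠ 0 ∧ P x} := by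
  have hfiber : ∀ a ∈ Icc (1 : ℤ) ((p : ℤ) - 1),
      #{b ∈ Icc (1 : ℤ) ((p : ℤ) - 1) | P ((a * b : ℤ) : ZMod p)} =
        #{x : ZMod p | x ≠ 0 ∧ P x} := by
    intro a ha
    have ha0 := intCast_ne_zero_of_mem_Icc ha
    simp only [Int.cast_mul]
    rw [card_filter_Icc_intCast (fun y => P ((a : ZMod p) * y)),
      ← card_filter_mul_left₀ (fun y => y ≠ 0 ∧ P y) ha0]
    simp [ha0]
  rw [card_filter, sum_product]
  simp only [← card_filter]
  rw [sum_congr rfl hfiber, sum_const, Int.card_Icc, smul_eq_mul]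
  congr 1
  omega

end ZMod

theorem legendreSym.two_mul_card_pairs_mul_sub_eq_one {p : ℕ} [Fact p.Prime] (hp : p ≠ 2)
    {d : ℤ} (hd : (d : ZMod p) ≠ 0) :
    2 * #{ab ∈ Icc (1 : ℤ) ((p : ℤ) - 1) ×ˢ Icc (1 : ℤ) ((p : ℤ) - 1) |
        legendreSym p (ab.1 * ab.2) * legendreSym p (ab.1 * ab.2 - d) = 1} + 3 * (p - 1) =
      (p - 1) * p := by
  have hF : ringChar (ZMod p) ≠ 2 := by rwa [ZMod.ringChar_zmod_n]
  have hcount := two_mul_card_quadraticChar_mul_sub_eq_one_add_three hF hd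
  rw [ZMod.card] at hcount
  set χ := quadraticChar (ZMod p)
  have hpred : ∀ s : ZMod p, s ≠ 0 ∧ χ s * χ (s - d) = 1 ↔ χ s * χ (s - d) = 1 :=
    fun s => and_iff_right_of_imp fun h hs => by simp [hs, χ] at h
  simp only [legendreSym, Int.cast_sub]
  rw [ZMod.card_filter_Icc_prod_Icc_mul (fun s => χ s * χ (s - d) = 1),
    filter_congr fun s _ => hpred s]
  linarith [congrArg ((p - 1) * ·) hcount]

/-- The number of pairs `1 ≤ a, b ≤ p-1` with `((a*b)/p)*((a*b-4c)/p) = 1` is at least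
`(p-1)²/2 - O(p^{3/2})`. -/
theorem stmt_7 : ∃ C : ℝ, 0 < C ∧ ∀ p : ℕ, ∀ hp : p.Prime, Odd p →
    ∀ c : ℤ, IsCoprime c (p : ℤ) →
    haveI : Fact p.Prime := ⟨hp⟩
    ((p : ℝ) - 1) ^ 2 / 2 - C * (p : ℝ) ^ ((3 : ℝ) / 2) ≤
      (((Finset.Icc (1 : ℤ) ((p : ℤ) - 1) ×ˢ Finset.Icc (1 : ℤ) ((p : ℤ) - 1)).filter
        (fun ab => legendreSym p (ab.1 * ab.2) *
          legendreSym p (ab.1 * ab.2 - 4 * c) = 1)).card : ℝ) := by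
  refine ⟨1, one_pos, fun p hp hodd c hc => ?_⟩
  have : Fact p.Prime := ⟨hp⟩
  have hp2 : p ≠ 2 := by
    rintro rfl
    exact absurd hodd (by decide)
  have hd : ((4 * c : ℤ) : ZMod p) ≠ 0 := by
    have h2 : (2 : ZMod p) ≠ 0 := Ring.two_ne_zero (by rwa [ZMod.ringChar_zmod_n])
    rw [Int.cast_mul, Int.cast_ofNat, show (4 : ZMod p) = 2 * 2 by norm_num]
    exact mul_ne_zero (mul_ne_zero h2 h2) (ZMod.unitOfIsCoprime c hc).ne_zero
  have hcount := legendreSym.two_mul_card_pairs_mul_sub_eq_one hp2 hd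
  have hp1 : (1 : ℝ) ≤ p := by exact_mod_cast hp.one_lt.le
  have hpow : (p : ℝ) ≤ (p : ℝ) ^ ((3 : ℝ) / 2) :=
    Real.self_le_rpow_of_one_le hp1 (by norm_num)
  have hcount' := congrArg (Nat.cast : ℕ → ℝ) hcount
  push_cast [Nat.cast_sub hp.one_le] at hcount'
  linarith
end
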